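/- arXiv:1805.03550 — 4 statements merged into one kernel-verified Lean document; each statement's English description precedes it below -/
import Mathlib

section
/- For any ε > 0 and with γ = π/(2 arctan(ε T_max L)), the inequality γ arctan(ε f_t) ≥ arcsin(f_t/(T_max L)) holds for all f_t ∈ [0, T_max L]. -/
/-! Jordan's inequality `sin x ≥ (2/π) x` on `[0, π/2]` gives `arcsin s ≤ (π/2) s` on `[0, 1]`, while
concavity of `arctan` on `[0, ∞)` together with `arctan 0 = 0` gives `s · arctan a ≤ arctan (s a)`
for `s ∈ [0, 1]`. With `s = f_t / (T_max L)` and `a = ε T_max L` the two bounds are joined by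
`(π/2) s = γ · s · arctan a`. -/

open Real Set

theorem ConcaveOn.mul_le_map_mul {D : Set ℝ} {f : ℝ → ℝ} (hf : ConcaveOn ℝ D f) (h0 : (0 : ℝ) ∈ D)
    (hf0 : f 0 = 0) {a s : ℝ} (ha : a ∈ D) (hs0 : 0 ≤ s) (hs1 : s ≤ 1) :
    s * f a ≤ f (s * a) := by
  simpa [hf0] using hf.2 ha h0 hs0 (sub_nonneg.2 hs1) (add_sub_cancel s 1)

theorem Real.concaveOn_arctan_Ici : ConcaveOn ℝ (Ici 0) arctan := by
  refine AntitoneOn.concaveOn_of_deriv (convex_Ici 0) continuous_arctan.continuousOn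
    differentiable_arctan.differentiableOn ?_
  intro x hx y _ hxy
  rw [interior_Ici, mem_Ioi] at hx
  simp only [deriv_arctan]
  gcongr

theorem Real.mul_arctan_le_arctan_mul {a s : ℝ} (ha : 0 ≤ a) (hs0 : 0 ≤ s) (hs1 : s ≤ 1) :
    s * arctan a ≤ arctan (s * a) :=
  concaveOn_arctan_Ici.mul_le_map_mul self_mem_Ici arctan_zero ha hs0 hs1

theorem Real.arcsin_le_pi_div_two_mul {s : ℝ} (hs0 : 0 ≤ s) (hs1 : s ≤ 1) :
    arcsin s ≤ π / 2 * s := by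
  have hJordan := mul_le_sin (arcsin_nonneg.2 hs0) (arcsin_le_pi_div_two s)
  rw [sin_arcsin (by linarith) hs1] at hJordan
  calc arcsin s = π / 2 * (2 / π * arcsin s) := by field_simp
    _ ≤ π / 2 * s := by gcongr

theorem gamma_arctan_ge_arcsin
    (Tmax L ε : ℝ) (hT : 0 < Tmax) (hL : 0 < L) (hε : 0 < ε)
    (γ : ℝ) (hγ : γ = π / (2 * Real.arctan (ε * (Tmax * L))))
    (ft : ℝ) (hft : ft ∈ Set.Icc 0 (Tmax * L)) :
    Real.arcsin (ft / (Tmax * L)) ≤ γ * Real.arctan (ε * ft) := by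
  obtain ⟨hf0, hfM⟩ := hft
  have hM : 0 < Tmax * L := mul_pos hT hL
  have hA : 0 < arctan (ε * (Tmax * L)) := arctan_pos.2 (mul_pos hε hM)
  set s := ft / (Tmax * L)
  have hs0 : 0 ≤ s := div_nonneg hf0 hM.le
  have hs1 : s ≤ 1 := (div_le_one hM).2 hfM
  have hγ0 : 0 ≤ γ := by rw [hγ]; positivity
  have hsM : s * (ε * (Tmax * L)) = ε * ft := by rw [mul_left_comm, div_mul_cancel₀ ft hM.ne']
  calc arcsin s ≤ π / 2 * s := arcsin_le_pi_div_two_mul hs0 hs1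
    _ = γ * (s * arctan (ε * (Tmax * L))) := by rw [hγ]; field_simp
    _ ≤ γ * arctan (s * (ε * (Tmax * L))) :=
      mul_le_mul_of_nonneg_left (mul_arctan_le_arctan_mul (mul_pos hε hM).le hs0 hs1) hγ0
    _ = γ * arctan (ε * ft) := by rw [hsM]
end

section
/- For γ = π/(2 arctan(ε T_max L)) with ε > 0, the function h(f_t) = f_t / tan(γ arctan(ε f_t)) on [-T_max L, T_max L] extends continuously at f_t = 0 with value 1/(γε), vanishes at f_t = ±T_max L, and satisfies 0 ≤ h(f_t) ≤ 1/(γε) on the whole interval. -/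
/-!
With `θ = arctan (ε x)`, the upper bound `x / tan (γ θ) ≤ 1 / (γ ε)` is `γ tan θ ≤ tan (γ θ)`,
which for `γ ≥ 1` follows from the convexity of `tan` on `[0, π/2)` and `tan 0 = 0`; `h` is even,
so `x > 0` suffices. The value at `0` is the reciprocal of the derivative `γ ε` of
`x ↦ tan (γ arctan (ε x))` at `0`, and at `x = ±T_max L` we have `γ θ = ±π/2`.
-/

open Real Set Filter Topology

namespace Real

lemma convexOn_tan : ConvexOn ℝ (Ico 0 (π / 2)) tan := by
  have hcos : ∀ x ∈ Ico 0 (π / 2), 0 < cos x := fun x hx =>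
    cos_pos_of_mem_Ioo ⟨by linarith [hx.1, pi_pos], hx.2⟩
  refine MonotoneOn.convexOn_of_deriv (convex_Ico _ _)
    (fun x hx => (hasDerivAt_tan (hcos x hx).ne').continuousAt.continuousWithinAt)
    (fun x hx => ?_) (fun x hx y hy hxy => ?_)
  · rw [interior_Ico] at hx
    exact (hasDerivAt_tan (hcos x (Ioo_subset_Ico_self hx)).ne').differentiableAt
      |>.differentiableWithinAt
  · rw [interior_Ico] at hx hy
    have hcy := hcos y (Ioo_subset_Ico_self hy)
    have hyx : cos y ≤ cos x :=
      cos_le_cos_of_nonneg_of_le_pi hx.1.le (by linarith [hy.2, pi_pos]) hxy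
    rw [deriv_tan, deriv_tan]
    gcongr

lemma mul_tan_le_tan_mul {c x : ℝ} (hc : 1 ≤ c) (hx : 0 ≤ x) (hcx : c * x < π / 2) :
    c * tan x ≤ tan (c * x) := by
  have hc0 : 0 < c := by linarith
  have h : tan ((1 - c⁻¹) • 0 + c⁻¹ • (c * x)) ≤ (1 - c⁻¹) • tan 0 + c⁻¹ • tan (c * x) :=
    convexOn_tan.2 ⟨le_rfl, by positivity⟩ ⟨by positivity, hcx⟩
      (sub_nonneg.2 (inv_le_one_of_one_le₀ hc)) (by positivity) (by ring)
  simp only [smul_eq_mul, mul_zero, zero_add, tan_zero, inv_mul_cancel_left₀ hc0.ne'] at h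
  calc c * tan x ≤ c * (c⁻¹ * tan (c * x)) := by gcongr
    _ = tan (c * x) := mul_inv_cancel_left₀ hc0.ne' _

end Real

lemma HasDerivAt.tendsto_sub_div_sub {𝕜 : Type*} [NontriviallyNormedField 𝕜] {f : 𝕜 → 𝕜}
    {d a : 𝕜} (hf : HasDerivAt f d a) (hd : d ≠ 0) :
    Tendsto (fun x => (x - a) / (f x - f a)) (𝓝[≠] a) (𝓝 d⁻¹) := by
  simpa [slope_def_field] using (hasDerivAt_iff_tendsto_slope.1 hf).inv₀ hd

noncomputable def quotTanArctan (γ ε x : ℝ) : ℝ := x / tan (γ * arctan (ε * x))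

lemma quotTanArctan_neg (γ ε x : ℝ) : quotTanArctan γ ε (-x) = quotTanArctan γ ε x := by
  simp only [quotTanArctan, mul_neg, arctan_neg, tan_neg, neg_div_neg_eq]

-- The junk value `tan (π / 2) = 0` makes `x / tan (π / 2) = 0`, which is the true limit;
-- in the form `x * cos / sin` continuity there is visible.
lemma continuousAt_quotTanArctan {γ ε x : ℝ} (hx : sin (γ * arctan (ε * x)) ≠ 0) :
    ContinuousAt (quotTanArctan γ ε) x := by
  have : quotTanArctan γ ε =
      fun y => y * cos (γ * arctan (ε * y)) / sin (γ * arctan (ε * y)) := by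
    funext y; rw [quotTanArctan, tan_eq_sin_div_cos, div_div_eq_mul_div]
  rw [this]
  fun_prop (disch := exact hx)

lemma tendsto_quotTanArctan_zero {γ ε : ℝ} (hγ : γ ≠ 0) (hε : ε ≠ 0) :
    Tendsto (quotTanArctan γ ε) (𝓝[≠] 0) (𝓝 (1 / (γ * ε))) := by
  have hderiv : HasDerivAt (fun x => tan (γ * arctan (ε * x))) (γ * ε) 0 := by
    have := (hasDerivAt_tan (x := γ * arctan (ε * 0)) (by simp)).comp 0
      ((((hasDerivAt_id 0).const_mul ε).arctan).const_mul γ)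
    simpa [Function.comp_def] using this
  convert hderiv.tendsto_sub_div_sub (mul_ne_zero hγ hε) using 2 with x
  · simp [quotTanArctan]
  · rw [one_div]

lemma mul_arctan_mem_Icc {γ ε M x : ℝ} (hγ : 0 ≤ γ) (hε : 0 ≤ ε)
    (hM : γ * arctan (ε * M) = π / 2) (hx : x ∈ Icc (-M) M) :
    γ * arctan (ε * x) ∈ Icc (-(π / 2)) (π / 2) := by
  rw [← hM, ← mul_neg, ← arctan_neg, ← mul_neg]
  exact ⟨by gcongr; exact hx.1, by gcongr; exact hx.2⟩

lemma sin_ne_zero_of_mem_Icc {y : ℝ} (hy0 : y ≠ 0) (hy : y ∈ Icc (-(π / 2)) (π / 2)) :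
    sin y ≠ 0 := by
  rwa [Ne, sin_eq_zero_iff_of_lt_of_lt (by linarith [hy.1, pi_pos]) (by linarith [hy.2, pi_pos])]

lemma quotTanArctan_mem_Icc_of_pos {γ ε x : ℝ} (hγ : 1 ≤ γ) (hε : 0 < ε) (hx : 0 < x)
    (hπ : γ * arctan (ε * x) ≤ π / 2) : quotTanArctan γ ε x ∈ Icc 0 (1 / (γ * ε)) := by
  have hγ0 : 0 < γ := by linarith
  rcases hπ.eq_or_lt with hπ | hπ
  · simp only [quotTanArctan, hπ, tan_pi_div_two, div_zero]
    exact ⟨le_rfl, by positivity⟩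
  have key : γ * (ε * x) ≤ tan (γ * arctan (ε * x)) := by
    simpa [tan_arctan] using mul_tan_le_tan_mul hγ (arctan_nonneg.2 (by positivity)) hπ
  have htan : 0 < tan (γ * arctan (ε * x)) := lt_of_lt_of_le (by positivity) key
  refine ⟨div_nonneg hx.le htan.le, ?_⟩
  calc quotTanArctan γ ε x ≤ x / (γ * (ε * x)) :=
        div_le_div_of_nonneg_left hx.le (by positivity) key
    _ = 1 / (γ * ε) := by field_simp

lemma quotTanArctan_mem_Icc {γ ε x : ℝ} (hγ : 1 ≤ γ) (hε : 0 < ε) (hx : x ≠ 0)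
    (hπ : γ * arctan (ε * x) ∈ Icc (-(π / 2)) (π / 2)) :
    quotTanArctan γ ε x ∈ Icc 0 (1 / (γ * ε)) := by
  rcases hx.lt_or_gt with hneg | hpos
  · rw [← quotTanArctan_neg]
    refine quotTanArctan_mem_Icc_of_pos hγ hε (neg_pos.2 hneg) ?_
    rw [mul_neg, arctan_neg, mul_neg]
    linarith [hπ.1]
  · exact quotTanArctan_mem_Icc_of_pos hγ hε hpos hπ.2

theorem h_continuous_and_bounded
    (Tmax L ε : ℝ) (hT : 0 < Tmax) (hL : 0 < L) (hε : 0 < ε)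
    (γ : ℝ) (hγ : γ = π / (2 * Real.arctan (ε * (Tmax * L))))
    (h : ℝ → ℝ)
    (hdef : ∀ ft : ℝ, h ft =
      if ft = 0 then 1 / (γ * ε) else ft / Real.tan (γ * Real.arctan (ε * ft))) :
    ContinuousOn h (Set.Icc (-(Tmax * L)) (Tmax * L)) ∧
    h (Tmax * L) = 0 ∧ h (-(Tmax * L)) = 0 ∧
    (∀ ft ∈ Set.Icc (-(Tmax * L)) (Tmax * L), 0 ≤ h ft ∧ h ft ≤ 1 / (γ * ε)) := by
  have hM : 0 < Tmax * L := mul_pos hT hL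
  have ha : 0 < arctan (ε * (Tmax * L)) := arctan_pos.2 (by positivity)
  have hγa : γ * arctan (ε * (Tmax * L)) = π / 2 := by rw [hγ]; field_simp
  have hγ1 : 1 ≤ γ := by
    rw [hγ, le_div_iff₀ (by positivity)]; linarith [arctan_lt_pi_div_two (ε * (Tmax * L))]
  have hγ0 : 0 < γ := by linarith
  have hrange : ∀ x ∈ Icc (-(Tmax * L)) (Tmax * L),
      γ * arctan (ε * x) ∈ Icc (-(π / 2)) (π / 2) := fun x hx =>
    mul_arctan_mem_Icc hγ0.le hε.le hγa hx
  have hend : quotTanArctan γ ε (Tmax * L) = 0 := by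
    rw [quotTanArctan, hγa, tan_pi_div_two, div_zero]
  have hh : h = Function.update (quotTanArctan γ ε) 0 (1 / (γ * ε)) := by
    funext x; rw [hdef, Function.update_apply]; rfl
  subst hh
  refine ⟨fun x hx => ?_, ?_, ?_, fun x hx => ?_⟩
  · refine ContinuousAt.continuousWithinAt ?_
    rcases eq_or_ne x 0 with rfl | hx0
    · exact continuousAt_update_same.2 (tendsto_quotTanArctan_zero hγ0.ne' hε.ne')
    refine (continuousAt_update_of_ne hx0).2 (continuousAt_quotTanArctan ?_)
    refine sin_ne_zero_of_mem_Icc ?_ (hrange x hx)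
    exact mul_ne_zero hγ0.ne' (arctan_eq_zero_iff.not.2 (mul_ne_zero hε.ne' hx0))
  · rw [Function.update_of_ne hM.ne', hend]
  · rw [Function.update_of_ne (neg_ne_zero.2 hM.ne'), quotTanArctan_neg, hend]
  · rcases eq_or_ne x 0 with rfl | hx0
    · rw [Function.update_self]
      exact ⟨by positivity, le_rfl⟩
    · rw [Function.update_of_ne hx0]
      exact quotTanArctan_mem_Icc hγ1 hε hx0 (hrange x hx)
end

section
/- The function V(q̃, q̇) = (1/2)(q̇ - γ_p f(q̃))ᵀ M (q̇ - γ_p f(q̃)) + U_T(q̃) - (γ_p²/2) f(q̃)ᵀ M f(q̃) is positive definite and radially unbounded in (q̃, q̇) ∈ ℝ²×ℝ², where M is a symmetric positive definite matrix, U_T(q̃) ≥ b‖q̃‖² for ‖q̃‖ < 1 and U_T(q̃) ≥ b‖q̃‖ for ‖q̃‖ ≥ 1, f(q̃) = q̃/(1+‖q̃‖), provided 0 < γ_p < sqrt(2b/λ_M{M}) with λ_M{M} the largest eigenvalue of M. -/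
/-! Write `y = q̇ - γₚ f(q̃)` and `n = ‖q̃‖`, so `V = ½ yᵀMy + U_T(q̃) - (γₚ²/2) fᵀMf`. As
`‖f(q̃)‖ = n/(1+n)` and `(n/(1+n))² ≤ min(n², n)`, the last term is at most `κ min(n², n)` with
`κ = γₚ² λ_M / 2 < b`, while `U_T ≥ b min(n², n)`: the potential part is positive for `q̃ ≠ 0` and
at least `b n - b - κ`. Compactness of the unit sphere gives `yᵀMy ≥ c ‖y‖²` with `c > 0`; as `f`
is bounded, `½ yᵀMy ≥ c ‖q̇‖²/4 - c γₚ²/2`. Thus `V` dominates a coercive function of `q̃` plus a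
coercive function of `q̇`, which suffices because the cocompact filter of a product is the
coproduct of the cocompact filters. -/

open Matrix Filter

section DotProduct

variable {ι : Type*} [Fintype ι]

theorem dotProduct_self_nonneg (v : ι → ℝ) : 0 ≤ v ⬝ᵥ v := by
  simpa using dotProduct_star_self_nonneg v

theorem sqrt_dotProduct_self_pos {v : ι → ℝ} : 0 < √(v ⬝ᵥ v) ↔ v ≠ 0 := by
  rw [Real.sqrt_pos, (dotProduct_self_nonneg v).lt_iff_ne', Ne, dotProduct_self_eq_zero]

theorem abs_le_sqrt_dotProduct_self (v : ι → ℝ) (i : ι) : |v i| ≤ √(v ⬝ᵥ v) := by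
  rw [← Real.sqrt_sq_eq_abs, sq]
  exact Real.sqrt_le_sqrt <|
    Finset.single_le_sum (fun j _ => mul_self_nonneg (v j)) (Finset.mem_univ i)

theorem norm_le_sqrt_dotProduct_self (v : ι → ℝ) : ‖v‖ ≤ √(v ⬝ᵥ v) :=
  (pi_norm_le_iff_of_nonneg (Real.sqrt_nonneg _)).2 fun i =>
    (Real.norm_eq_abs _).trans_le (abs_le_sqrt_dotProduct_self v i)

theorem tendsto_sqrt_dotProduct_self_cocompact :
    Tendsto (fun v : ι → ℝ => √(v ⬝ᵥ v)) (cocompact _) atTop :=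
  tendsto_atTop_mono norm_le_sqrt_dotProduct_self tendsto_norm_cocompact_atTop

theorem tendsto_dotProduct_self_cocompact :
    Tendsto (fun v : ι → ℝ => v ⬝ᵥ v) (cocompact _) atTop :=
  ((tendsto_pow_atTop two_ne_zero).comp tendsto_sqrt_dotProduct_self_cocompact).congr
    fun v => Real.sq_sqrt (dotProduct_self_nonneg v)

theorem half_dotProduct_self_sub_le (a b : ι → ℝ) :
    (1 / 2) * (a ⬝ᵥ a) - b ⬝ᵥ b ≤ (a - b) ⬝ᵥ (a - b) := by
  have h := dotProduct_self_nonneg (a - (2 : ℝ) • b)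
  simp only [sub_dotProduct, dotProduct_sub, smul_dotProduct, dotProduct_smul, smul_eq_mul,
    dotProduct_comm b a] at h ⊢
  linarith

theorem dotProduct_smul_self (r : ℝ) (v : ι → ℝ) : (r • v) ⬝ᵥ (r • v) = r ^ 2 * (v ⬝ᵥ v) := by
  simp only [smul_dotProduct, dotProduct_smul, smul_eq_mul]; ring

theorem Matrix.PosDef.exists_pos_mul_dotProduct_self_le {M : Matrix ι ι ℝ} (hM : M.PosDef) :
    ∃ c > 0, ∀ x : ι → ℝ, c * (x ⬝ᵥ x) ≤ x ⬝ᵥ (M *ᵥ x) := by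
  set S := {x : ι → ℝ | x ⬝ᵥ x = 1}
  have hS : IsCompact S := by
    refine Metric.isCompact_of_isClosed_isBounded (isClosed_eq (by fun_prop) continuous_const)
      ((Metric.isBounded_closedBall (x := 0) (r := 1)).subset fun x hx => ?_)
    simpa [hx.out] using norm_le_sqrt_dotProduct_self x
  obtain ⟨c, hc, hcS⟩ := hS.exists_forall_le' (f := fun x => x ⬝ᵥ (M *ᵥ x)) (by fun_prop)
    fun x hx => by
      have hx0 : x ≠ 0 := by rintro rfl; simp [S] at hx
      simpa using hM.dotProduct_mulVec_pos hx0
  refine ⟨c, hc, fun x => ?_⟩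
  rcases eq_or_ne x 0 with rfl | hx
  · simp
  set r := √(x ⬝ᵥ x)
  have hr : 0 < r := sqrt_dotProduct_self_pos.2 hx
  have hr2 : r ^ 2 = x ⬝ᵥ x := Real.sq_sqrt (dotProduct_self_nonneg x)
  have hcx := hcS (r⁻¹ • x) (by
    show _ = _
    rw [dotProduct_smul_self, ← hr2]; field_simp)
  simp only [mulVec_smul, smul_dotProduct, dotProduct_smul, smul_eq_mul] at hcx
  rwa [← mul_assoc, ← sq, inv_pow, inv_mul_eq_div, le_div_iff₀ (by positivity), hr2] at hcx

end DotProduct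

theorem tendsto_cocompact_prod_of_add_le {X Y : Type*} [TopologicalSpace X] [TopologicalSpace Y]
    {F : X × Y → ℝ} {φ : X → ℝ} {ψ : Y → ℝ} {a b : ℝ}
    (hφ : Tendsto φ (cocompact X) atTop) (hψ : Tendsto ψ (cocompact Y) atTop)
    (hφa : ∀ x, a ≤ φ x) (hψb : ∀ y, b ≤ ψ y) (hF : ∀ p, φ p.1 + ψ p.2 ≤ F p) :
    Tendsto F (cocompact (X × Y)) atTop := by
  rw [← coprod_cocompact]
  refine tendsto_atTop_mono hF (tendsto_sup.2 ⟨?_, ?_⟩)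
  · exact tendsto_atTop_add_right_of_le _ b (hφ.comp tendsto_comap) fun p => hψb p.2
  · exact tendsto_atTop_add_left_of_le _ a (fun p => hφa p.1) (hψ.comp tendsto_comap)

theorem tendsto_cocompact_of_sqrt_dotProduct_add_dotProduct_le {ι : Type*} [Fintype ι]
    {F : (ι → ℝ) × (ι → ℝ) → ℝ} {a c C : ℝ} (ha : 0 < a) (hc : 0 < c)
    (hF : ∀ p, a * √(p.1 ⬝ᵥ p.1) - C + c * (p.2 ⬝ᵥ p.2) ≤ F p) :
    Tendsto F (cocompact _) atTop :=
  tendsto_cocompact_prod_of_add_le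
    (tendsto_atTop_add_const_right _ (-C)
      (tendsto_sqrt_dotProduct_self_cocompact.const_mul_atTop ha))
    (tendsto_dotProduct_self_cocompact.const_mul_atTop hc)
    (a := -C) (fun v => by simpa using mul_nonneg ha.le (Real.sqrt_nonneg (v ⬝ᵥ v)))
    (b := 0) (fun v => mul_nonneg hc.le (dotProduct_self_nonneg v)) fun p => by
      simpa only [sub_eq_add_neg] using hF p

theorem pos_and_sq_mul_lt_of_lt_sqrt_div {a γ l : ℝ} (ha : 0 < a) (hγ0 : 0 < γ)
    (hγ : γ < √(a / l)) : 0 < l ∧ γ ^ 2 * l < a := by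
  have hγ2 : γ ^ 2 < a / l := (Real.lt_sqrt hγ0.le).1 hγ
  have hl : 0 < l := (div_pos_iff_of_pos_left ha).1 ((pow_pos hγ0 2).trans hγ2)
  exact ⟨hl, (lt_div_iff₀ hl).1 hγ2⟩

theorem div_one_add_le_one {n : ℝ} (hn : 0 ≤ n) : n / (1 + n) ≤ 1 :=
  (div_le_one (by positivity)).2 (by linarith)

theorem div_one_add_sq_le_min {n : ℝ} (hn : 0 ≤ n) : (n / (1 + n)) ^ 2 ≤ min (n ^ 2) n := by
  have h0 : 0 ≤ n / (1 + n) := by positivity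
  have hle : n / (1 + n) ≤ n := div_le_self hn (by linarith)
  exact le_min (pow_le_pow_left₀ h0 hle 2)
    ((pow_le_of_le_one h0 (div_one_add_le_one hn) two_ne_zero).trans hle)

theorem mul_div_one_add_sq_lt_mul_min {κ b n : ℝ} (hκ0 : 0 ≤ κ) (hκb : κ < b) (hn : 0 < n) :
    κ * (n / (1 + n)) ^ 2 < b * min (n ^ 2) n :=
  (mul_le_mul_of_nonneg_left (div_one_add_sq_le_min hn.le) hκ0).trans_lt
    (mul_lt_mul_of_pos_right hκb (lt_min (by positivity) hn))

theorem sub_one_le_min_sq (n : ℝ) : n - 1 ≤ min (n ^ 2) n :=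
  le_min (by nlinarith [sq_nonneg (n - 1)]) (by linarith)

theorem mul_min_sq_le_of_piecewise {b n u : ℝ} (hn : 0 ≤ n) (hlt : n < 1 → b * n ^ 2 ≤ u)
    (hge : 1 ≤ n → b * n ≤ u) : b * min (n ^ 2) n ≤ u := by
  rcases lt_or_ge n 1 with h | h
  · rw [min_eq_left (by nlinarith)]; exact hlt h
  · rw [min_eq_right (by nlinarith)]; exact hge h

theorem le_half_dotProduct_mulVec_sub_smul {ι : Type*} [Fintype ι] {M : Matrix ι ι ℝ} {c : ℝ}
    (hc : 0 ≤ c) (hcM : ∀ x, c * (x ⬝ᵥ x) ≤ x ⬝ᵥ (M *ᵥ x)) (γ : ℝ) {v g : ι → ℝ}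
    (hg : g ⬝ᵥ g ≤ 1) :
    c / 4 * (v ⬝ᵥ v) - c * γ ^ 2 / 2 ≤ 1 / 2 * ((v - γ • g) ⬝ᵥ (M *ᵥ (v - γ • g))) := by
  have h := half_dotProduct_self_sub_le v (γ • g)
  rw [dotProduct_smul_self] at h
  have hγg : c * γ ^ 2 * (g ⬝ᵥ g) ≤ c * γ ^ 2 * 1 :=
    mul_le_mul_of_nonneg_left hg (by positivity)
  linarith [mul_le_mul_of_nonneg_left h hc, hcM (v - γ • g)]

theorem lyapunov_posdef_radially_unbounded_general
    (M : Matrix (Fin 2) (Fin 2) ℝ) (hM : M.PosDef)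
    (lamM : ℝ) (hlam : ∀ x : Fin 2 → ℝ, x ⬝ᵥ (M *ᵥ x) ≤ lamM * (x ⬝ᵥ x))
    (b γp : ℝ) (hb : 0 < b) (hγ0 : 0 < γp) (hγ : γp < Real.sqrt (2 * b / lamM))
    (nrm : (Fin 2 → ℝ) → ℝ) (hnrm : ∀ v, nrm v = Real.sqrt (v ⬝ᵥ v))
    (UT : (Fin 2 → ℝ) → ℝ) (hUT0 : UT 0 = 0)
    (hUTlt : ∀ q, nrm q < 1 → b * nrm q ^ 2 ≤ UT q)
    (hUTge : ∀ q, 1 ≤ nrm q → b * nrm q ≤ UT q)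
    (f : (Fin 2 → ℝ) → Fin 2 → ℝ) (hf : ∀ q, f q = (1 + nrm q)⁻¹ • q)
    (V : (Fin 2 → ℝ) → (Fin 2 → ℝ) → ℝ)
    (hV : ∀ qt qd, V qt qd =
      (1 / 2) * ((qd - γp • f qt) ⬝ᵥ (M *ᵥ (qd - γp • f qt))) + UT qt
        - (γp ^ 2 / 2) * (f qt ⬝ᵥ (M *ᵥ f qt))) :
    (∀ qt qd : Fin 2 → ℝ, (qt, qd) ≠ (0, 0) → 0 < V qt qd) ∧
    V 0 0 = 0 ∧
    Filter.Tendsto (fun p : (Fin 2 → ℝ) × (Fin 2 → ℝ) => V p.1 p.2)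
      (Filter.cocompact _) Filter.atTop := by
  obtain ⟨hlam0, hγ2⟩ := pos_and_sq_mul_lt_of_lt_sqrt_div (by positivity) hγ0 hγ
  have hκb : γp ^ 2 * lamM / 2 < b := by linarith
  have hnrm0 q : 0 ≤ nrm q := hnrm q ▸ Real.sqrt_nonneg _
  have hff q : f q ⬝ᵥ f q = (nrm q / (1 + nrm q)) ^ 2 := by
    rw [hf, dotProduct_smul_self, ← Real.sq_sqrt (dotProduct_self_nonneg q), ← hnrm]; ring
  have hfMf q :
      γp ^ 2 / 2 * (f q ⬝ᵥ (M *ᵥ f q)) ≤ γp ^ 2 * lamM / 2 * (nrm q / (1 + nrm q)) ^ 2 := by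
    rw [← hff]
    linarith [mul_le_mul_of_nonneg_left (hlam (f q)) (by positivity : 0 ≤ γp ^ 2 / 2)]
  set κ := γp ^ 2 * lamM / 2
  have hκ0 : 0 ≤ κ := by positivity
  have hUT q : b * min (nrm q ^ 2) (nrm q) ≤ UT q :=
    mul_min_sq_le_of_piecewise (hnrm0 q) (hUTlt q) (hUTge q)
  have hf0 : f 0 = 0 := by simp [hf]
  obtain ⟨c, hc, hcM⟩ := hM.exists_pos_mul_dotProduct_self_le
  refine ⟨fun qt qd hne => ?_, by simp [hV, hf0, hUT0], ?_⟩
  · rw [hV]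
    rcases eq_or_ne qt 0 with rfl | hqt
    · have hqd : qd ≠ 0 := by rintro rfl; exact hne rfl
      simpa [hf0, hUT0] using hM.dotProduct_mulVec_pos hqd
    have hW := (hfMf qt).trans_lt <| (mul_div_one_add_sq_lt_mul_min hκ0 hκb
      (hnrm qt ▸ sqrt_dotProduct_self_pos.2 hqt)).trans_le (hUT qt)
    linarith [mul_nonneg hc.le (dotProduct_self_nonneg (qd - γp • f qt)),
      hcM (qd - γp • f qt)]
  · refine tendsto_cocompact_of_sqrt_dotProduct_add_dotProduct_le hb (by positivity : 0 < c / 4)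
      (C := b + κ + c * γp ^ 2 / 2) fun p => ?_
    have hs1 : (nrm p.1 / (1 + nrm p.1)) ^ 2 ≤ 1 :=
      pow_le_one₀ (div_nonneg (hnrm0 p.1) (by linarith [hnrm0 p.1]))
        (div_one_add_le_one (hnrm0 p.1))
    have hkinetic := le_half_dotProduct_mulVec_sub_smul hc.le hcM γp (v := p.2)
      ((hff p.1).trans_le hs1)
    rw [← hnrm, hV]
    linarith [hfMf p.1, mul_le_mul_of_nonneg_left hs1 hκ0, hUT p.1,
      mul_le_mul_of_nonneg_left (sub_one_le_min_sq (nrm p.1)) hb.le]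

theorem lyapunov_posdef_radially_unbounded
    (M : Matrix (Fin 2) (Fin 2) ℝ) (hM : M.PosDef) (hMsymm : M.IsSymm)
    (lamM : ℝ) (hlam : ∀ x : Fin 2 → ℝ, x ⬝ᵥ (M *ᵥ x) ≤ lamM * (x ⬝ᵥ x))
    (b γp : ℝ) (hb : 0 < b) (hγ0 : 0 < γp) (hγ : γp < Real.sqrt (2 * b / lamM))
    (nrm : (Fin 2 → ℝ) → ℝ) (hnrm : ∀ v, nrm v = Real.sqrt (v ⬝ᵥ v))
    (UT : (Fin 2 → ℝ) → ℝ) (hUTc : Continuous UT) (hUT0 : UT 0 = 0)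
    (hUTlt : ∀ q, nrm q < 1 → b * nrm q ^ 2 ≤ UT q)
    (hUTge : ∀ q, 1 ≤ nrm q → b * nrm q ≤ UT q)
    (f : (Fin 2 → ℝ) → Fin 2 → ℝ) (hf : ∀ q, f q = (1 + nrm q)⁻¹ • q)
    (V : (Fin 2 → ℝ) → (Fin 2 → ℝ) → ℝ)
    (hV : ∀ qt qd, V qt qd =
      (1 / 2) * ((qd - γp • f qt) ⬝ᵥ (M *ᵥ (qd - γp • f qt))) + UT qt
        - (γp ^ 2 / 2) * (f qt ⬝ᵥ (M *ᵥ f qt))) :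
    (∀ qt qd : Fin 2 → ℝ, (qt, qd) ≠ (0, 0) → 0 < V qt qd) ∧
    V 0 0 = 0 ∧
    Filter.Tendsto (fun p : (Fin 2 → ℝ) × (Fin 2 → ℝ) => V p.1 p.2)
      (Filter.cocompact _) Filter.atTop :=
  lyapunov_posdef_radially_unbounded_general M hM lamM hlam b γp hb hγ0 hγ nrm hnrm UT hUT0 hUTlt
    hUTge f hf V hV
end

section
/- Given the feedforward law, the modified attitude error θ̃_f defined implicitly by f_t sin(θ̄+θ̃_f)/sin θ̄ = σ_{0,F}(f_t/sin(θ̄+θ̃)) sin(θ̄+θ̃), in the case sign(sin(θ̄+θ̃)) = -sign(sin θ̄) with 0 < |f_t| ≤ F, satisfies θ̃_f = -θ̄ and |θ̃_f| ≤ |θ̃|. -/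
open Real

theorem feedforward_opposite_sign_case
    (F θbar θt ft : ℝ) (hF : 0 < F)
    (hθbar : θbar ∈ Set.Ioc 0 (π / 2)) (hθt : θt ∈ Set.Ico (-π) π)
    (hft : ft ∈ Set.Ioc 0 F)
    (hsign : Real.sin (θbar + θt) < 0) (hsinbar : 0 < Real.sin θbar) :
    max (min (ft / Real.sin (θbar + θt)) F) 0 = 0 ∧
    (∀ θf ∈ Set.Icc (-θbar) 0, ft * Real.sin (θbar + θf) = 0 → θf = -θbar) ∧
    |(-θbar)| ≤ |θt| := by
  obtain ⟨hb1, hb2⟩ := hθbar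
  obtain ⟨hf1, hf2⟩ := hft
  refine ⟨?_, ?_, ?_⟩
  · have : ft / Real.sin (θbar + θt) < 0 := div_neg_of_pos_of_neg hf1 hsign
    have : min (ft / Real.sin (θbar + θt)) F ≤ 0 := le_trans (min_le_left _ _) this.le
    exact max_eq_right this
  · rintro θf ⟨h1, h2⟩ heq
    have hs : Real.sin (θbar + θf) = 0 := by
      rcases mul_eq_zero.mp heq with h | h
      · exact absurd h (ne_of_gt hf1)
      · exact h
    by_contra hne
    have hpos : 0 < θbar + θf := by
      rcases lt_or_eq_of_le h1 with h | h
      · linarith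
      · exact absurd h.symm hne
    have : 0 < Real.sin (θbar + θf) :=
      Real.sin_pos_of_pos_of_lt_pi hpos (by linarith [Real.pi_pos])
    linarith
  · rw [abs_neg, abs_of_pos hb1]
    by_contra h
    push_neg at h
    have h' := abs_lt.mp h
    have : 0 < Real.sin (θbar + θt) :=
      Real.sin_pos_of_pos_of_lt_pi (by linarith) (by linarith)
    linarith
end
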